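/- Let M be a finitely generated ℤ[t]-module with 2ⁿ·M = 0 for some n ≥ 1. Then M has length one if and only if for every nonzero x ∈ M the annihilator ideal Ann_{ℤ[t]}(x) is contained in the ideal 2ℤ[t]. -/

import Mathlib

/-- An `R`-module `M` has *length one* if there is a short exact sequence
`0 → F₁ → F₀ → M → 0` with `F₀`, `F₁` finitely generated free `R`-modules. -/
def IsLengthOne (R M : Type*) [CommRing R] [AddCommGroup M] [Module R M] : Prop :=
  ∃ (k l : ℕ) (f : (Fin k → R) →ₗ[R] (Fin l → R)) (g : (Fin l → R) →ₗ[R] M),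
    Function.Injective f ∧ Function.Surjective g ∧ LinearMap.range f = LinearMap.ker g

/-!
Let `q` be a prime of a domain `R` (here `q = 2` in `ℤ[t]`).

If `0 → Rᵏ →f Rˡ →g M → 0` is exact, `q ^ n • M = 0`, and `p • g v = 0` with `q ∤ p`, then
`p • v = f a` and `q ^ n • v = f b`, so `q ^ n • a = p • b`; hence `p` divides every coordinate of
`a`, so `v ∈ range f` and `g v = 0`.

Conversely, induct on `n`. The `q`-torsion `A` of `M` is a finitely generated torsion-free module
over the principal ideal domain `R ⧸ (q)` (`ℤ[t] ⧸ (2) ≅ 𝔽₂[t]`), hence free, so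
`0 → Rᵏ →q Rᵏ → A → 0` is exact. The quotient `M ⧸ A` satisfies the same hypotheses with
exponent `n - 1`, and by the horseshoe lemma an extension of modules of length one has length one.
-/

open Polynomial

section

variable {R M : Type*} [CommRing R] [AddCommGroup M] [Module R M]

theorem Module.Free.exists_linearEquiv_fin_pi (F : Type*) [AddCommGroup F] [Module R F]
    [Module.Free R F] [Module.Finite R F] : ∃ k : ℕ, Nonempty (F ≃ₗ[R] (Fin k → R)) :=
  ⟨_, ⟨((Module.Free.chooseBasis R F).reindex (Fintype.equivFin _)).equivFun⟩⟩

theorem IsLengthOne.of_exact {F₁ F₀ : Type*} [AddCommGroup F₁] [Module R F₁] [Module.Free R F₁]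
    [Module.Finite R F₁] [AddCommGroup F₀] [Module R F₀] [Module.Free R F₀] [Module.Finite R F₀]
    {f : F₁ →ₗ[R] F₀} {g : F₀ →ₗ[R] M} (hf : Function.Injective f) (hg : Function.Surjective g)
    (hfg : Function.Exact f g) : IsLengthOne R M := by
  obtain ⟨k, ⟨e₁⟩⟩ := Module.Free.exists_linearEquiv_fin_pi (R := R) F₁
  obtain ⟨l, ⟨e₀⟩⟩ := Module.Free.exists_linearEquiv_fin_pi (R := R) F₀
  refine ⟨k, l, e₀.toLinearMap ∘ₗ f ∘ₗ e₁.symm.toLinearMap, g ∘ₗ e₀.symm.toLinearMap,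
    e₀.injective.comp (hf.comp e₁.symm.injective), hg.comp e₀.symm.surjective, ?_⟩
  have hexact : Function.Exact (e₀.toLinearMap ∘ₗ f ∘ₗ e₁.symm.toLinearMap)
      (g ∘ₗ e₀.symm.toLinearMap) := by
    rw [← LinearMap.comp_assoc, LinearEquiv.precomp_exact_iff_exact,
      LinearEquiv.conj_exact_iff_exact]
    exact hfg
  exact hexact.linearMap_ker_eq.symm

theorem IsLengthOne.of_linearEquiv {N : Type*} [AddCommGroup N] [Module R N]
    (hM : IsLengthOne R M) (e : M ≃ₗ[R] N) : IsLengthOne R N := by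
  obtain ⟨k, l, f, g, hf, hg, hfg⟩ := hM
  refine ⟨k, l, f, e.toLinearMap ∘ₗ g, hf, e.surjective.comp hg, ?_⟩
  rwa [LinearEquiv.ker_comp]

theorem isLengthOne_pi_quotient_span_singleton [IsDomain R] {q : R} (hq : q ≠ 0)
    (ι : Type*) [Finite ι] : IsLengthOne R (ι → R ⧸ Ideal.span {q}) := by
  refine IsLengthOne.of_exact (f := q • LinearMap.id)
    (g := LinearMap.piMap fun _ => (Ideal.span {q}).mkQ) (smul_right_injective _ hq)
    (Function.Surjective.piMap fun _ => Ideal.Quotient.mk_surjective) fun v => ?_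
  simp only [LinearMap.coe_piMap, funext_iff, Pi.map_apply, Submodule.mkQ_apply, Pi.zero_apply,
    Submodule.Quotient.mk_eq_zero, Ideal.mem_span_singleton', Classical.skolem, Set.mem_range,
    LinearMap.smul_apply, LinearMap.id_apply, Pi.smul_apply, smul_eq_mul, mul_comm q]

theorem Prime.dvd_of_dvd_pow_mul [IsDomain R] {q p a : R} (hq : Prime q) (hqp : ¬q ∣ p) {n : ℕ}
    (h : p ∣ q ^ n * a) : p ∣ a := by
  induction n with
  | zero => simpa using h
  | succ n ih =>
    obtain ⟨b, hb⟩ := h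
    obtain ⟨c, rfl⟩ := (hq.dvd_or_dvd ⟨q ^ n * a, by rw [← hb]; ring⟩).resolve_left hqp
    exact ih ⟨c, mul_left_cancel₀ hq.ne_zero (by linear_combination hb)⟩

theorem IsLengthOne.prime_dvd_of_smul_eq_zero [IsDomain R] {q : R} (hq : Prime q) {n : ℕ}
    (hM : IsLengthOne R M) (hexp : ∀ x : M, q ^ n • x = 0) {x : M} (hx : x ≠ 0) {p : R}
    (hp : p • x = 0) : q ∣ p := by
  obtain ⟨k, l, f, g, hf, hg, hfg⟩ := hM
  by_contra hqp
  obtain ⟨v, rfl⟩ := hg x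
  have lift : ∀ r : R, r • g v = 0 → ∃ a, f a = r • v := fun r hr ↦ by
    rw [← map_smul] at hr
    exact hfg.ge hr
  obtain ⟨a, ha⟩ := lift p hp
  obtain ⟨b, hb⟩ := lift (q ^ n) (hexp _)
  have hab : q ^ n • a = p • b := hf (by rw [map_smul, map_smul, ha, hb, smul_comm])
  choose c hc using fun i ↦ hq.dvd_of_dvd_pow_mul hqp ⟨b i, congrFun hab i⟩
  have hvc : v = f c := by
    have hp0 : p ≠ 0 := by rintro rfl; exact hqp (dvd_zero q)
    refine smul_right_injective _ hp0 (?_ : p • v = p • f c)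
    rw [← ha, ← map_smul]
    exact congrArg f (funext hc)
  exact hx (hfg.le ⟨c, hvc.symm⟩)

theorem isLengthOne_of_smul_eq_zero [IsDomain R] {q : R} (hq : Prime q)
    [IsPrincipalIdealRing (R ⧸ Ideal.span {q})] [Module.Finite R M] (hqM : ∀ x : M, q • x = 0)
    (hann : ∀ x : M, x ≠ 0 → ∀ p : R, p • x = 0 → q ∣ p) : IsLengthOne R M := by
  let I := Ideal.span {q}
  have hI : Module.IsTorsionBySet R M I := (Module.isTorsionBySet_span_singleton_iff q).mpr hqM
  let _ : Module (R ⧸ I) M := hI.module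
  have : IsScalarTower R (R ⧸ I) M := hI.isScalarTower
  have : Module.Finite (R ⧸ I) M := Module.Finite.of_restrictScalars_finite R _ M
  have : I.IsPrime := (Ideal.span_singleton_prime hq.ne_zero).mpr hq
  have : Module.IsTorsionFree (R ⧸ I) M := .of_smul_eq_zero <|
    Ideal.Quotient.mk_surjective.forall.mpr fun p x hpx ↦ by
      rw [Ideal.Quotient.eq_zero_iff_mem, Ideal.mem_span_singleton]
      exact or_iff_not_imp_right.mpr fun hx ↦ hann x hx p hpx
  exact (isLengthOne_pi_quotient_span_singleton hq.ne_zero _).of_linearEquiv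
    ((Module.Free.chooseBasis (R ⧸ I) M).equivFun.restrictScalars R).symm

section Horseshoe

variable {A : Submodule R M} {K₁ P₁ K₂ P₂ : Type*} [AddCommGroup K₁] [Module R K₁]
  [AddCommGroup P₁] [Module R P₁] [AddCommGroup K₂] [Module R K₂] [AddCommGroup P₂] [Module R P₂]
  {f₁ : K₁ →ₗ[R] P₁} {g₁ : P₁ →ₗ[R] A} {f₂ : K₂ →ₗ[R] P₂} {g₂ : P₂ →ₗ[R] M ⧸ A}
  {h : P₂ →ₗ[R] M} {τ : K₂ →ₗ[R] P₁}

theorem surjective_coprod_of_mkQ_comp_eq (hg₁ : Function.Surjective g₁)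
    (hg₂ : Function.Surjective g₂) (hh : A.mkQ ∘ₗ h = g₂) :
    Function.Surjective ((A.subtype ∘ₗ g₁).coprod h) := by
  intro m
  obtain ⟨y, hy⟩ := hg₂ (A.mkQ m)
  have hmy : m - h y ∈ A := by
    rw [← Submodule.Quotient.mk_eq_zero, Submodule.Quotient.mk_sub, ← A.mkQ_apply,
      ← A.mkQ_apply, ← hy, ← hh, LinearMap.comp_apply, sub_self]
  obtain ⟨x, hx⟩ := hg₁ ⟨_, hmy⟩
  exact ⟨(x, y), by simp [hx]⟩

theorem injective_horseshoe (hf₁ : Function.Injective f₁) (hf₂ : Function.Injective f₂) :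
    Function.Injective ((f₁ ∘ₗ .fst R K₁ K₂ - τ ∘ₗ .snd R K₁ K₂).prod (f₂ ∘ₗ .snd R K₁ K₂)) := by
  rintro ⟨u, w⟩ ⟨u', w'⟩ huw
  obtain ⟨hu, hw⟩ : f₁ u - τ w = f₁ u' - τ w' ∧ f₂ w = f₂ w' := Prod.mk.inj huw
  obtain rfl := hf₂ hw
  rw [hf₁ (sub_left_inj.mp hu)]

theorem exact_horseshoe (hfg₁ : Function.Exact f₁ g₁) (hfg₂ : Function.Exact f₂ g₂)
    (hh : A.mkQ ∘ₗ h = g₂) (hτ : ∀ w, (g₁ (τ w) : M) = h (f₂ w)) :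
    Function.Exact ((f₁ ∘ₗ .fst R K₁ K₂ - τ ∘ₗ .snd R K₁ K₂).prod (f₂ ∘ₗ .snd R K₁ K₂))
      ((A.subtype ∘ₗ g₁).coprod h) := by
  rintro ⟨x, y⟩
  change (g₁ x : M) + h y = 0 ↔ ∃ uw : K₁ × K₂, (f₁ uw.1 - τ uw.2, f₂ uw.2) = (x, y)
  constructor
  · intro hxy
    have hy : g₂ y = 0 := by
      rw [← hh, LinearMap.comp_apply, eq_neg_of_add_eq_zero_right hxy, map_neg, neg_eq_zero,
        A.mkQ_apply, Submodule.Quotient.mk_eq_zero]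
      exact (g₁ x).2
    obtain ⟨w, rfl⟩ := (hfg₂ y).mp hy
    obtain ⟨u, hu⟩ := (hfg₁ (x + τ w)).mp (Subtype.ext (by simp [hτ, hxy]))
    exact ⟨(u, w), by rw [hu, add_sub_cancel_right]⟩
  · rintro ⟨⟨u, w⟩, huw⟩
    obtain ⟨rfl, rfl⟩ := Prod.mk.inj huw
    simp [hτ, hfg₁.apply_apply_eq_zero]

end Horseshoe

theorem IsLengthOne.of_submodule_of_quotient {A : Submodule R M} (hA : IsLengthOne R A)
    (hQ : IsLengthOne R (M ⧸ A)) : IsLengthOne R M := by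
  obtain ⟨k₁, l₁, f₁, g₁, hf₁, hg₁, hfg₁⟩ := hA
  obtain ⟨k₂, l₂, f₂, g₂, hf₂, hg₂, hfg₂⟩ := hQ
  obtain ⟨h, hh⟩ := Module.projective_lifting_property A.mkQ g₂ A.mkQ_surjective
  have hfg₁ := LinearMap.exact_iff.mpr hfg₁.symm
  have hfg₂ := LinearMap.exact_iff.mpr hfg₂.symm
  have hhf₂ (w) : h (f₂ w) ∈ A := by
    rw [← Submodule.Quotient.mk_eq_zero, ← A.mkQ_apply, ← LinearMap.comp_apply, hh]
    exact hfg₂.apply_apply_eq_zero w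
  obtain ⟨τ, hτ⟩ :=
    Module.projective_lifting_property g₁ (LinearMap.codRestrict A (h ∘ₗ f₂) hhf₂) hg₁
  exact .of_exact (injective_horseshoe hf₁ hf₂) (surjective_coprod_of_mkQ_comp_eq hg₁ hg₂ hh)
    (exact_horseshoe hfg₁ hfg₂ hh fun w ↦ congrArg Subtype.val (LinearMap.congr_fun hτ w))

theorem isLengthOne_of_pow_smul_eq_zero [IsDomain R] [IsNoetherianRing R] {q : R} (hq : Prime q)
    [IsPrincipalIdealRing (R ⧸ Ideal.span {q})] [Module.Finite R M] (n : ℕ)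
    (hexp : ∀ x : M, q ^ n • x = 0) (hann : ∀ x : M, x ≠ 0 → ∀ p : R, p • x = 0 → q ∣ p) :
    IsLengthOne R M := by
  induction n generalizing M with
  | zero => exact isLengthOne_of_smul_eq_zero hq (fun x ↦ by
      rw [show x = 0 by simpa using hexp x, smul_zero]) hann
  | succ n ih =>
    let A := Submodule.torsionBy R M q
    have hA : IsLengthOne R A :=
      isLengthOne_of_smul_eq_zero hq (Submodule.smul_torsionBy q) fun x hx p hpx ↦
        hann x (by simpa using hx) p (by simpa using congrArg Subtype.val hpx)
    refine hA.of_submodule_of_quotient (ih ?_ ?_)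
    · refine Submodule.Quotient.mk_surjective A |>.forall.mpr fun x ↦ ?_
      rw [← Submodule.Quotient.mk_smul, Submodule.Quotient.mk_eq_zero,
        Submodule.mem_torsionBy_iff, smul_smul, ← pow_succ']
      exact hexp x
    · refine Submodule.Quotient.mk_surjective A |>.forall.mpr fun x hx p hpx ↦ ?_
      rw [← Submodule.Quotient.mk_smul, Submodule.Quotient.mk_eq_zero,
        Submodule.mem_torsionBy_iff, smul_comm] at hpx
      rw [Ne, Submodule.Quotient.mk_eq_zero, Submodule.mem_torsionBy_iff] at hx
      exact hann _ hx p hpx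

end

theorem Polynomial.Int.prime_two : Prime (2 : ℤ[X]) := by
  simpa using prime_C_iff.mpr _root_.Int.prime_two

noncomputable def Polynomial.Int.quotientSpanTwoEquiv :
    (ZMod 2)[X] ≃+* ℤ[X] ⧸ Ideal.span {(2 : ℤ[X])} :=
  ((mapEquiv (Int.quotientSpanNatEquivZMod 2).symm).trans
    (Ideal.polynomialQuotientEquivQuotientPolynomial _)).trans
    (Ideal.quotEquivOfEq (by simp [Ideal.map_span]))

instance : IsPrincipalIdealRing (ℤ[X] ⧸ Ideal.span {(2 : ℤ[X])}) :=
  .of_surjective _ Polynomial.Int.quotientSpanTwoEquiv.surjective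

theorem lengthOne_iff_annihilators_sub_two
    (M : Type*) [AddCommGroup M] [Module (Polynomial ℤ) M]
    [Module.Finite (Polynomial ℤ) M]
    (n : ℕ) (hexp : ∀ x : M, (2 : Polynomial ℤ) ^ n • x = 0) :
    IsLengthOne (Polynomial ℤ) M ↔
      ∀ x : M, x ≠ 0 → ∀ p : Polynomial ℤ, p • x = 0 →
        p ∈ Ideal.span {(2 : Polynomial ℤ)} := by
  simp only [Ideal.mem_span_singleton]
  exact ⟨fun hM _ hx _ hp ↦ hM.prime_dvd_of_smul_eq_zero Polynomial.Int.prime_two hexp hx hp,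
    isLengthOne_of_pow_smul_eq_zero Polynomial.Int.prime_two n hexp⟩
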